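/- Let R ⊆ T be commutative rings, G a locally finite group of automorphisms of T leaving R invariant. If (R, T) is an INC-pair (every intermediate ring S with R ⊆ S ⊆ T satisfies incomparability over R), then (R^G, T^G) is an INC-pair. -/

import Mathlib

/-- The fixed subring `T^G` of a group `G` acting on a commutative ring `T`. -/
def fixedSubring (G T : Type*) [CommRing T] [Group G] [MulSemiringAction G T] :
    Subring T where
  carrier := MulAction.fixedPoints G T
  zero_mem' := by intro σ; simp
  one_mem' := by intro σ; simp
  add_mem' := by intro a b ha hb σ; simp [smul_add, ha σ, hb σ]
  neg_mem' := by intro a ha σ; simp [smul_neg, ha σ]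
  mul_mem' := by intro a b ha hb σ; simp [smul_mul', ha σ, hb σ]

/-- `(A, B)` is an INC-pair: for every intermediate ring `S`, comparable primes of
`S` with the same contraction to `A` coincide. -/
def IsINCPairWithin {T : Type*} [CommRing T] (A B : Subring T) : Prop :=
  ∀ (S : Subring T) (hAS : A ≤ S), S ≤ B →
    ∀ Q Q' : Ideal S, Q.IsPrime → Q'.IsPrime → Q ≤ Q' →
      Q.comap (Subring.inclusion hAS) = Q'.comap (Subring.inclusion hAS) → Q = Q'

open Polynomial

private lemma isIntegralElem_of_coeffs {T : Type*} [CommRing T] {S : Subring T} {x : T}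
    {q : T[X]} (hm : q.Monic) (h0 : q.eval x = 0) (hc : ∀ i, q.coeff i ∈ S) :
    S.subtype.IsIntegralElem x := by
  have hsub : (↑q.coeffs : Set T) ⊆ S := by
    intro c hcin
    obtain ⟨n, -, rfl⟩ := Polynomial.mem_coeffs_iff.mp hcin
    exact hc n
  refine ⟨q.toSubring S hsub, ?_, ?_⟩
  · exact Polynomial.monic_of_injective (Subtype.coe_injective)
      (by rw [Polynomial.map_toSubring]; exact hm)
  · rw [Polynomial.eval₂_eq_eval_map, Polynomial.map_toSubring]; exact h0

private lemma isIntegralElem_inclusion {T : Type*} [CommRing T] {S U : Subring T} (h : S ≤ U)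
    {x : U} (hx : S.subtype.IsIntegralElem (x : T)) :
    (Subring.inclusion h).IsIntegralElem x := by
  obtain ⟨p, hm, hp⟩ := hx
  refine ⟨p, hm, ?_⟩
  apply Subtype.coe_injective
  have := Polynomial.hom_eval₂ p (Subring.inclusion h) U.subtype x
  have hcomp : (U.subtype).comp (Subring.inclusion h) = S.subtype := RingHom.ext fun a => rfl
  rw [hcomp] at this
  simpa using this.trans hp

private lemma orbit_poly {G T : Type*} [CommRing T] [Group G] [MulSemiringAction G T]
    {x : T} (hfin : (MulAction.orbit G x).Finite) :
    ∃ q : T[X], q.Monic ∧ q.eval x = 0 ∧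
      (∀ (σ : G) (i : ℕ), σ • q.coeff i = q.coeff i) ∧
      (∀ U : Subring T, (MulAction.orbit G x ⊆ U) → ∀ i, q.coeff i ∈ U) := by
  classical
  set F := hfin.toFinset with hF
  have hFmem : ∀ {t : T}, t ∈ F ↔ t ∈ MulAction.orbit G x := fun {t} => hfin.mem_toFinset
  refine ⟨∏ t ∈ F, (X - C t), monic_prod_of_monic _ _ fun t _ => monic_X_sub_C t, ?_, ?_, ?_⟩
  · rw [eval_prod]
    exact Finset.prod_eq_zero (hFmem.mpr (MulAction.mem_orbit_self x)) (by simp)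
  · intro σ i
    have hq : σ • ∏ t ∈ F, (X - C t) = ∏ t ∈ F, (X - C t) := by
      have h1 : σ • ∏ t ∈ F, (X - C t) = ∏ t ∈ F, σ • (X - C t) :=
        map_prod (MulSemiringAction.toRingHom G T[X] σ) _ _
      rw [h1]
      have h2 : ∀ t : T, σ • ((X : T[X]) - C t) = X - C (σ • t) := by
        intro t; rw [smul_sub, Polynomial.smul_X, Polynomial.smul_C]
      simp only [h2]
      refine Finset.prod_bij' (fun t _ => σ • t) (fun t _ => σ⁻¹ • t) ?_ ?_ ?_ ?_ ?_
      · intro t ht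
        obtain ⟨g, rfl⟩ := hFmem.mp ht
        exact hFmem.mpr ⟨σ * g, (mul_smul _ _ _)⟩
      · intro t ht
        obtain ⟨g, rfl⟩ := hFmem.mp ht
        exact hFmem.mpr ⟨σ⁻¹ * g, (mul_smul _ _ _)⟩
      · intro t _; simp
      · intro t _; simp
      · intro t _; simp
    calc σ • (∏ t ∈ F, (X - C t)).coeff i
        = (σ • ∏ t ∈ F, (X - C t)).coeff i := (Polynomial.coeff_smul σ _ i).symm
      _ = (∏ t ∈ F, (X - C t)).coeff i := by rw [hq]
  · intro U hU i
    have hlift : (∏ t ∈ F, ((X : T[X]) - C t)) ∈ Polynomial.lifts U.subtype := by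
      refine Subsemiring.prod_mem _ fun t ht => ?_
      have htU : t ∈ U := hU (hFmem.mp ht)
      have hx : (X : T[X]) - C t = X + C (U.subtype ⟨-t, neg_mem htU⟩) := by
        simp [sub_eq_add_neg]
      rw [hx]
      exact add_mem (Polynomial.X_mem_lifts _) (Polynomial.C_mem_lifts _ _)
    obtain ⟨c, hc⟩ := (Polynomial.lifts_iff_coeff_lifts _).mp hlift i
    rw [← hc]; exact c.2

/-- if `G` is locally finite and `(R, T)` is an INC-pair, then
`(R^G, T^G)` is an INC-pair. -/
theorem stmt15 (G T : Type*) [CommRing T] [Group G] [MulSemiringAction G T]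
    (hlf : ∀ t : T, (MulAction.orbit G t).Finite)
    (R : Subring T) (hinv : ∀ σ : G, ∀ r ∈ R, σ • r ∈ R)
    (hINC : IsINCPairWithin R ⊤) :
    IsINCPairWithin (R ⊓ fixedSubring G T) (fixedSubring G T) := by
  classical
  intro S hAS hSB Q Q' hQ hQ' hQQ' hcom
  set A : Subring T := R ⊓ fixedSubring G T with hA
  set S' : Subring T := R ⊔ S with hS'def
  have hRS' : R ≤ S' := le_sup_left
  have hSS' : S ≤ S' := le_sup_right
  have hAR : A ≤ R := inf_le_left
  -- every element of R is integral over any subring containing A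
  have hRint : ∀ x ∈ R, ∀ V : Subring T, A ≤ V → V.subtype.IsIntegralElem x := by
    intro x hx V hAV
    obtain ⟨q, hm, h0, hfix, hmem⟩ := orbit_poly (hlf x)
    refine isIntegralElem_of_coeffs hm h0 fun i => hAV ?_
    have horb : MulAction.orbit G x ⊆ R := by
      rintro t ⟨g, rfl⟩; exact hinv g x hx
    exact ⟨hmem R horb i, fun σ => hfix σ i⟩
  -- every element of S' is integral over S
  have hS'int : ∀ x ∈ S', S.subtype.IsIntegralElem x := by
    intro x hx
    have hx' : x ∈ Subring.closure ((R : Set T) ∪ (S : Set T)) := by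
      rw [Subring.closure_union, Subring.closure_eq, Subring.closure_eq]
      exact hx
    clear hx
    induction hx' using Subring.closure_induction with
    | mem t ht =>
      rcases ht with ht | ht
      · exact hRint t ht S hAS
      · exact (show S.subtype ⟨t, ht⟩ = t from rfl) ▸ S.subtype.isIntegralElem_map
    | zero => exact (map_zero S.subtype) ▸ S.subtype.isIntegralElem_map
    | one => exact (map_one S.subtype) ▸ S.subtype.isIntegralElem_map
    | add a b _ _ ha hb => exact RingHom.IsIntegralElem.add _ ha hb
    | neg a _ ha => exact RingHom.IsIntegralElem.neg _ ha
    | mul a b _ _ ha hb => exact RingHom.IsIntegralElem.mul _ ha hb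
  letI : Algebra S S' := (Subring.inclusion hSS').toAlgebra
  haveI : Algebra.IsIntegral S S' :=
    ⟨fun z => isIntegralElem_inclusion hSS' (hS'int (z : T) z.2)⟩
  haveI := hQ
  haveI := hQ'
  -- lying over
  obtain ⟨P, -, hPprime, hPcomap⟩ := Ideal.exists_ideal_over_prime_of_isIntegral Q ⊥ (by
    intro z hz
    have : Subring.inclusion hSS' z = 0 := by simp at hz; exact hz
    have hz0 : z = 0 := by
      have h0 : ((Subring.inclusion hSS') z : T) = ((0 : S') : T) := congrArg Subtype.val this
      exact Subtype.coe_injective h0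
    rw [hz0]; exact Q.zero_mem)
  -- going up
  obtain ⟨P', hPP', hP'prime, hP'comap⟩ :=
    Ideal.exists_ideal_over_prime_of_isIntegral Q' P (by rw [hPcomap]; exact hQQ')
  haveI := hPprime
  haveI := hP'prime
  set p : Ideal R := P.comap (Subring.inclusion hRS') with hp
  set p' : Ideal R := P'.comap (Subring.inclusion hRS') with hp'
  haveI : p.IsPrime := Ideal.IsPrime.comap _
  haveI : p'.IsPrime := Ideal.IsPrime.comap _
  have hpp' : p ≤ p' := Ideal.comap_mono hPP'
  -- contractions to A agree
  have e1 : p.comap (Subring.inclusion hAR) = Q.comap (Subring.inclusion hAS) := by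
    rw [hp, Ideal.comap_comap, ← hPcomap, Ideal.comap_comap]
    rfl
  have e2 : p'.comap (Subring.inclusion hAR) = Q'.comap (Subring.inclusion hAS) := by
    rw [hp', Ideal.comap_comap, ← hP'comap, Ideal.comap_comap]
    rfl
  have hAeq : p.comap (Subring.inclusion hAR) = p'.comap (Subring.inclusion hAR) := by
    rw [e1, e2, hcom]
  -- incomparability for the integral extension A ≤ R
  letI : Algebra A R := (Subring.inclusion hAR).toAlgebra
  have hpeq : p = p' := by
    by_contra hne
    obtain ⟨x, hxp', hxp⟩ := SetLike.exists_of_lt (lt_of_le_of_ne hpp' hne)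
    have hint : IsIntegral A x :=
      isIntegralElem_inclusion hAR (hRint (x : T) x.2 A le_rfl)
    have hlt := Ideal.comap_lt_comap_of_integral_mem_sdiff (I := p) (J := p') hpp'
      ⟨hxp', hxp⟩ hint
    exact absurd hAeq (ne_of_lt hlt)
  -- apply the INC hypothesis
  have hPeq : P = P' := hINC S' hRS' le_top P P' hPprime hP'prime hPP' hpeq
  rw [← hPcomap, ← hP'comap, hPeq]
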